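/- For every integer n ≥ 1 and every p ∈ I_n, the real number λ_p := 1/w_{p,n} satisfies λ_p > 1, λ_p is an eigenvalue of M_p regarded as a real matrix, and every complex eigenvalue μ of M_p with μ ≠ λ_p satisfies |μ| < λ_p; in particular the spectral radius of M_p equals 1/w_{p,n}. -/

import Mathlib

open Matrix

noncomputable section

/-- `M1 = [[1,1,0],[0,1,0],[0,0,1]]`. -/
def M1 : Matrix (Fin 3) (Fin 3) ℝ := !![1, 1, 0; 0, 1, 0; 0, 0, 1]

/-- `M2 = [[1,0,0],[1,1,1],[0,0,1]]`. -/
def M2 : Matrix (Fin 3) (Fin 3) ℝ := !![1, 0, 0; 1, 1, 1; 0, 0, 1]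

/-- `M3 = [[1,0,0],[0,1,0],[0,1,1]]`. -/
def M3 : Matrix (Fin 3) (Fin 3) ℝ := !![1, 0, 0; 0, 1, 0; 0, 1, 1]

/- A tuple `p = (p_n, p_n', q_n, …, p_1, p_1', q_1) ∈ ℕ₀^{3n}` is encoded by three
functions `P P' Q : Fin n → ℕ`, where the index `i : Fin n` corresponds to the
subscript `i + 1` (so `P ⟨0,_⟩ = p_1`, …, `P ⟨n-1,_⟩ = p_n`). -/

/-- The transition matrix `M_p = M1^{p_n} M3^{p_n'} M2^{q_n} ⋯ M1^{p_1} M3^{p_1'} M2^{q_1}`. -/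
def Mp (n : ℕ) (P P' Q : Fin n → ℕ) : Matrix (Fin 3) (Fin 3) ℝ :=
  ((List.finRange n).map fun i => M1 ^ P i.rev * M3 ^ P' i.rev * M2 ^ Q i.rev).prod

/-- Membership of the tuple `p` in `I_n`. -/
def memI (n : ℕ) (P P' Q : Fin n → ℕ) : Prop :=
  (∀ i, 0 < Q i) ∧ (∀ i, 0 < P i + P' i) ∧ (∃ j, 0 < P j) ∧ (∃ k, 0 < P' k)

/-- Finite continued fraction: `cf [a₁, …, a_m] x = 1/(a₁ + 1/(a₂ + ⋯ + 1/(a_m + x)))`. -/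
def cf (l : List ℕ) (x : ℝ) : ℝ := l.foldr (fun a y => 1 / (a + y)) x

/-- The (0-indexed) block index `k(j+1) - 1 = n - 1 - (j mod n)` used at step `j + 1`. -/
def blk (n : ℕ) (hn : 0 < n) (j : ℕ) : Fin n :=
  ⟨n - 1 - j % n, lt_of_le_of_lt (Nat.sub_le _ _) (Nat.sub_lt hn one_pos)⟩

/-- The sequence `(a₁, …, a_{2n}) = (p_n + p_n', q_n, …, p_1 + p_1', q_1)` as a list. -/
def aList (n : ℕ) (hn : 0 < n) (P P' Q : Fin n → ℕ) : List ℕ :=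
  (List.range n).flatMap fun i => [P (blk n hn i) + P' (blk n hn i), Q (blk n hn i)]

/-- `isH0 n hn P P' Q h0` says that `h0` is the number `h_{p,0}`: a real number in `(0,1)`
that is a fixed point of `x ↦ 1/(a₁ + 1/(a₂ + ⋯ + 1/(a_{2n} + x)))` (there is exactly one). -/
def isH0 (n : ℕ) (hn : 0 < n) (P P' Q : Fin n → ℕ) (h0 : ℝ) : Prop :=
  h0 ∈ Set.Ioo (0 : ℝ) 1 ∧ cf (aList n hn P P' Q) h0 = h0

/-- The pair `(w_{p,j}, h_{p,j})`, with `w_{p,0} = 1`, `h_{p,0} = h0`, and for `j ≥ 1`: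
`w_{p,j} = w_{p,j-1} − (p_{k(j)} + p'_{k(j)}) h_{p,j-1}`, `h_{p,j} = h_{p,j-1} − q_{k(j)} w_{p,j}`. -/
def wh (n : ℕ) (hn : 0 < n) (P P' Q : Fin n → ℕ) (h0 : ℝ) : ℕ → ℝ × ℝ
  | 0 => (1, h0)
  | j + 1 =>
    let prev := wh n hn P P' Q h0 j
    let b := blk n hn j
    let w := prev.1 - ((P b : ℝ) + (P' b : ℝ)) * prev.2
    (w, prev.2 - (Q b : ℝ) * w)

/-- The width `w_{p,j}`. -/
def wseq (n : ℕ) (hn : 0 < n) (P P' Q : Fin n → ℕ) (h0 : ℝ) (j : ℕ) : ℝ :=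
  (wh n hn P P' Q h0 j).1

/-- The height `h_{p,j}`. -/
def hseq (n : ℕ) (hn : 0 < n) (P P' Q : Fin n → ℕ) (h0 : ℝ) (j : ℕ) : ℝ :=
  (wh n hn P P' Q h0 j).2

/-- The split ratio `s_p = Σ_{i=0}^∞ p_{k(i+1)} h_{p,i}`. -/
def splitRatio (n : ℕ) (hn : 0 < n) (P P' Q : Fin n → ℕ) (h0 : ℝ) : ℝ :=
  ∑' i : ℕ, (P (blk n hn i) : ℝ) * hseq n hn P P' Q h0 i

/-- The reindexing realizing the shift `T`: the tuple `T(p)` is given by the functions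
`P ∘ shiftIdx n hn`, `P' ∘ shiftIdx n hn`, `Q ∘ shiftIdx n hn`. -/
def shiftIdx (n : ℕ) (hn : 0 < n) (i : Fin n) : Fin n :=
  ⟨(i.val + (n - 1)) % n, Nat.mod_lt _ hn⟩

/-!
Write `U_j = Σ_{i<j} p_{k(i+1)} h_i` and `S_j` likewise with `p'`, so that `w_j = 1 - U_j - S_j`.
With `c = 1 - w_n`, the vectors `v_j = (U_n - c U_j, c h_j, S_n - c S_j)` satisfy
`B_j v_{j+1} = v_j` for the `j`-th block `B_j = M1^p M3^p' M2^q` of `M_p`, and `v_n = w_n v_0`;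
so `v_0` is an eigenvector of `M_p` for `1/w_n`. It is positive, and `0 < w_n < 1`, because the
ratios `h_j / w_j` are the (positive) tails of the continued fraction fixed by `h_0`.
`M_p` is a product of nonnegative matrices with positive diagonal. Gershgorin's theorem for
`diag(v_0)⁻¹ M_p diag(v_0)`, whose rows sum to `1/w_n`, puts each eigenvalue in a disc
`|μ - d| ≤ 1/w_n - d` with `d > 0`, and such a disc meets the circle `|μ| = 1/w_n` only at
`1/w_n`.
-/

open Finset

theorem Complex.norm_lt_or_eq_of_norm_sub_ofReal_le {z : ℂ} {a r : ℝ} (ha : 0 < a)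
    (h : ‖z - a‖ ≤ r - a) : ‖z‖ < r ∨ z = r := by
  have htri : ‖z‖ - a ≤ ‖z - a‖ := by
    simpa [abs_of_pos ha] using norm_sub_norm_le z (a : ℂ)
  rcases (show ‖z‖ ≤ r by linarith).lt_or_eq with hlt | heq
  · exact Or.inl hlt
  right
  have hsq : ‖z - a‖ ^ 2 ≤ (‖z‖ - a) ^ 2 :=
    pow_le_pow_left₀ (norm_nonneg _) (by linarith) 2
  have hre : ‖z‖ ≤ z.re := by
    rw [Complex.sq_norm, Complex.normSq_sub, ← Complex.sq_norm, Complex.normSq_ofReal] at hsq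
    simp only [Complex.conj_ofReal, Complex.re_mul_ofReal] at hsq
    nlinarith
  rw [← heq]
  exact Complex.eq_coe_norm_of_nonneg (Complex.re_eq_norm.mp (hre.antisymm' z.re_le_norm))

namespace Matrix

variable {ι : Type*} [Fintype ι] [DecidableEq ι]

theorem list_prod_ofFn_mulVec {R : Type*} [CommSemiring R] {n : ℕ} (B : Fin n → Matrix ι ι R)
    (v : ℕ → ι → R) (hB : ∀ i : Fin n, B i *ᵥ v (i + 1) = v i) :
    (List.ofFn B).prod *ᵥ v n = v 0 := by
  induction n generalizing v with
  | zero => simp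
  | succ n ih =>
    rw [List.ofFn_succ, List.prod_cons, ← mulVec_mulVec,
      ih (fun i => B i.succ) (fun j => v (j + 1)) (fun i => hB i.succ)]
    exact hB 0

theorem mem_spectrum_of_mulVec_eq_smul {K : Type*} [Field K] {A : Matrix ι ι K} {v : ι → K}
    {r : K} (hv : v ≠ 0) (hAv : A *ᵥ v = r • v) : r ∈ spectrum K A :=
  spectrum_toLin' A ▸ (Module.End.hasEigenvalue_of_hasEigenvector
    ⟨Module.End.mem_eigenspace_iff.mpr (by rwa [toLin'_apply]), hv⟩).mem_spectrum

variable (ι) in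
def nonnegPosDiag : Submonoid (Matrix ι ι ℝ) where
  carrier := {A | (∀ i j, 0 ≤ A i j) ∧ ∀ i, 0 < A i i}
  one_mem' := ⟨fun i j => by by_cases h : i = j <;> simp [one_apply, h], fun i => by simp⟩
  mul_mem' {A B} hA hB :=
    ⟨fun i j => sum_nonneg fun k _ => mul_nonneg (hA.1 i k) (hB.1 k j),
      fun i => sum_pos' (fun k _ => mul_nonneg (hA.1 i k) (hB.1 k i))
        ⟨i, mem_univ i, mul_pos (hA.2 i) (hB.2 i)⟩⟩

section Perron

variable {A : Matrix ι ι ℝ} (hA : A ∈ nonnegPosDiag ι) {v : ι → ℝ} (hv : ∀ i, 0 < v i)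
  {r : ℝ} (hAv : A *ᵥ v = r • v)
include hA hv hAv

theorem norm_lt_of_mulVec_eq_smul_of_pos {μ : ℂ}
    (hμ : μ ∈ spectrum ℂ (A.map (fun x => (x : ℂ)))) (hne : μ ≠ r) : ‖μ‖ < r := by
  rw [← spectrum_toLin', ← Module.End.hasEigenvalue_iff_mem_spectrum] at hμ
  obtain ⟨w, hw, hw0⟩ := hμ.exists_hasEigenvector
  rw [Module.End.mem_eigenspace_iff, toLin'_apply] at hw
  set B : Matrix ι ι ℂ := of fun i j => (A i j * v j / v i : ℝ)
  have hBw : B *ᵥ (fun i => w i / v i) = μ • fun i => w i / v i := by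
    ext i
    have hi := congrFun hw i
    simp only [mulVec, dotProduct, map_apply, Pi.smul_apply, smul_eq_mul] at hi ⊢
    rw [mul_div_assoc', ← hi, sum_div]
    refine sum_congr rfl fun j _ => ?_
    have hvi : (v i : ℂ) ≠ 0 := by exact_mod_cast (hv i).ne'
    have hvj : (v j : ℂ) ≠ 0 := by exact_mod_cast (hv j).ne'
    simp only [B, of_apply]
    push_cast
    field_simp
  have hBμ : Module.End.HasEigenvalue (toLin' B) μ := by
    refine Module.End.hasEigenvalue_of_hasEigenvector
      ⟨Module.End.mem_eigenspace_iff.mpr (by rwa [toLin'_apply]), fun h => hw0 ?_⟩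
    ext i
    have := congrFun h i
    simp only [Pi.zero_apply, div_eq_zero_iff, Complex.ofReal_eq_zero] at this
    exact this.resolve_right (hv i).ne'
  obtain ⟨k, hk⟩ := eigenvalue_mem_ball hBμ
  have hrow : ∑ j ∈ univ.erase k, ‖B k j‖ = r - A k k := by
    have hk' := congrFun hAv k
    simp only [mulVec, dotProduct, Pi.smul_apply, smul_eq_mul] at hk'
    simp only [B, of_apply, Complex.norm_real, Real.norm_eq_abs]
    rw [sum_congr rfl fun j _ => abs_of_nonneg
        (div_nonneg (mul_nonneg (hA.1 k j) (hv j).le) (hv k).le),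
      sum_erase_eq_sub (mem_univ k), ← sum_div, hk']
    field_simp [(hv k).ne']
  rw [Metric.mem_closedBall, hrow, dist_eq_norm] at hk
  simp only [B, of_apply, mul_div_cancel_right₀ _ (hv k).ne'] at hk
  exact (Complex.norm_lt_or_eq_of_norm_sub_ofReal_le (hA.2 k) hk).resolve_right hne

theorem spectralRadius_eq_of_mulVec_eq_smul_of_pos [Nonempty ι] :
    spectralRadius ℂ (A.map (fun x => (x : ℂ))) = ENNReal.ofReal r := by
  obtain ⟨i⟩ := ‹Nonempty ι›
  have hr : 0 ≤ r := by
    have hi := congrFun hAv i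
    simp only [mulVec, dotProduct, Pi.smul_apply, smul_eq_mul] at hi
    exact nonneg_of_mul_nonneg_left (hi ▸ sum_nonneg fun j _ => mul_nonneg (hA.1 i j) (hv j).le)
      (hv i)
  have hnorm : ‖(r : ℂ)‖₊ = ENNReal.ofReal r := by
    rw [← enorm_eq_nnnorm, ← ofReal_norm, Complex.norm_of_nonneg hr]
  have hrμ : (r : ℂ) ∈ spectrum ℂ (A.map (fun x => (x : ℂ))) := by
    refine mem_spectrum_of_mulVec_eq_smul (v := fun i => (v i : ℂ)) (fun h => ?_) ?_
    · exact (hv i).ne' (by simpa using congrFun h i)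
    · ext j
      have h := RingHom.map_mulVec Complex.ofRealHom A v j
      rw [hAv] at h
      exact h.symm.trans (by simp)
  refine le_antisymm (iSup₂_le fun μ hμ => ?_)
    (hnorm ▸ le_iSup₂ (f := fun μ _ => (‖μ‖₊ : ENNReal)) _ hrμ)
  rw [← enorm_eq_nnnorm, ← ofReal_norm]
  refine ENNReal.ofReal_le_ofReal ?_
  rcases eq_or_ne μ r with rfl | hne
  · rw [Complex.norm_of_nonneg hr]
  · exact (norm_lt_of_mulVec_eq_smul_of_pos hA hv hAv hμ hne).le

end Perron

end Matrix

theorem cf_cons (a : ℕ) (l : List ℕ) (x : ℝ) : cf (a :: l) x = 1 / (a + cf l x) := rfl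

theorem cf_pos (l : List ℕ) {x : ℝ} (hx : 0 < x) : 0 < cf l x := by
  induction l with
  | nil => exact hx
  | cons a l ih => exact one_div_pos.mpr (by positivity)

theorem blk_of_lt {n : ℕ} (hn : 0 < n) {j : ℕ} (hj : j < n) :
    blk n hn j = Fin.rev ⟨j, hj⟩ := by
  ext
  simp only [blk, Fin.val_rev, Nat.mod_eq_of_lt hj]
  omega

section Widths

variable (n : ℕ) (hn : 0 < n) (P P' Q : Fin n → ℕ) (h0 : ℝ)

/-- The continued-fraction tail `(a_{2j+1}, …, a_{2n})` of `aList`. -/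
def aTail (j : ℕ) : List ℕ :=
  ((List.range n).drop j).flatMap fun i => [P (blk n hn i) + P' (blk n hn i), Q (blk n hn i)]

theorem aTail_zero : aTail n hn P P' Q 0 = aList n hn P P' Q := rfl

theorem aTail_self : aTail n hn P P' Q n = [] := by
  simp [aTail, List.drop_eq_nil_of_le]

theorem aTail_of_lt {j : ℕ} (hj : j < n) :
    aTail n hn P P' Q j =
      (P (blk n hn j) + P' (blk n hn j)) :: Q (blk n hn j) :: aTail n hn P P' Q (j + 1) := by
  simp [aTail, List.drop_eq_getElem_cons (show j < (List.range n).length by simpa)]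

theorem wseq_succ (j : ℕ) :
    wseq n hn P P' Q h0 (j + 1) =
      wseq n hn P P' Q h0 j - (P (blk n hn j) + P' (blk n hn j) : ℝ) * hseq n hn P P' Q h0 j :=
  rfl

theorem hseq_succ (j : ℕ) :
    hseq n hn P P' Q h0 (j + 1) =
      hseq n hn P P' Q h0 j - Q (blk n hn j) * wseq n hn P P' Q h0 (j + 1) :=
  rfl

def heightSum (f : Fin n → ℕ) (j : ℕ) : ℝ :=
  ∑ i ∈ range j, f (blk n hn i) * hseq n hn P P' Q h0 i

theorem heightSum_succ (f : Fin n → ℕ) (j : ℕ) :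
    heightSum n hn P P' Q h0 f (j + 1) =
      heightSum n hn P P' Q h0 f j + f (blk n hn j) * hseq n hn P P' Q h0 j :=
  sum_range_succ _ _

theorem wseq_eq_one_sub_heightSum (j : ℕ) :
    wseq n hn P P' Q h0 j =
      1 - (heightSum n hn P P' Q h0 P j + heightSum n hn P P' Q h0 P' j) := by
  induction j with
  | zero => simp [heightSum, wseq, wh]
  | succ j ih =>
    rw [wseq_succ, ih, heightSum_succ, heightSum_succ]
    ring

variable {n hn P P' Q h0} (hh0 : isH0 n hn P P' Q h0)
include hh0

theorem wseq_pos_and_hseq_eq_mul_cf {j : ℕ} (hj : j ≤ n) :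
    0 < wseq n hn P P' Q h0 j ∧
      hseq n hn P P' Q h0 j = wseq n hn P P' Q h0 j * cf (aTail n hn P P' Q j) h0 := by
  induction j with
  | zero => exact ⟨one_pos, by rw [aTail_zero, hh0.2]; exact (one_mul h0).symm⟩
  | succ j ih =>
    obtain ⟨hw, hh⟩ := ih (by omega)
    have hy := cf_pos (aTail n hn P P' Q (j + 1)) hh0.1.1
    set y := cf (aTail n hn P P' Q (j + 1)) h0
    rw [aTail_of_lt n hn P P' Q (by omega), cf_cons, cf_cons] at hh
    set x := 1 / ((P (blk n hn j) + P' (blk n hn j) : ℕ) + 1 / (Q (blk n hn j) + y) : ℝ)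
    have hax : ((P (blk n hn j) + P' (blk n hn j) : ℕ) : ℝ) * x =
        1 - x / (Q (blk n hn j) + y) := by
      simp only [x]
      field_simp
      ring
    have hw' :
        wseq n hn P P' Q h0 (j + 1) = wseq n hn P P' Q h0 j * x / (Q (blk n hn j) + y) := by
      rw [wseq_succ, hh]
      push_cast at hax
      linear_combination (-wseq n hn P P' Q h0 j) * hax
    refine ⟨by rw [hw']; positivity, ?_⟩
    rw [hseq_succ, hh, hw']
    field_simp
    ring

theorem hseq_pos {j : ℕ} (hj : j ≤ n) : 0 < hseq n hn P P' Q h0 j := by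
  obtain ⟨hw, hh⟩ := wseq_pos_and_hseq_eq_mul_cf hh0 hj
  rw [hh]
  exact mul_pos hw (cf_pos _ hh0.1.1)

theorem hseq_self : hseq n hn P P' Q h0 n = wseq n hn P P' Q h0 n * h0 := by
  rw [(wseq_pos_and_hseq_eq_mul_cf hh0 le_rfl).2, aTail_self]
  rfl

theorem heightSum_pos {f : Fin n → ℕ} (hf : ∃ k, 0 < f k) :
    0 < heightSum n hn P P' Q h0 f n := by
  obtain ⟨k, hk⟩ := hf
  refine sum_pos'
    (fun i hi => mul_nonneg (Nat.cast_nonneg _) (hseq_pos hh0 (mem_range.mp hi).le).le)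
    ⟨k.rev, mem_range.mpr k.rev.isLt, ?_⟩
  rw [blk_of_lt hn k.rev.isLt, Fin.eta, Fin.rev_rev]
  exact mul_pos (by exact_mod_cast hk) (hseq_pos hh0 k.rev.isLt.le)

theorem wseq_self_mem_Ioo (hP : ∃ k, 0 < P k) (hP' : ∃ k, 0 < P' k) :
    wseq n hn P P' Q h0 n ∈ Set.Ioo 0 1 := by
  refine ⟨(wseq_pos_and_hseq_eq_mul_cf hh0 le_rfl).1, ?_⟩
  rw [wseq_eq_one_sub_heightSum]
  linarith [heightSum_pos hh0 hP, heightSum_pos hh0 hP']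

end Widths

theorem M1_pow_mulVec (p : ℕ) (u h s : ℝ) : M1 ^ p *ᵥ ![u, h, s] = ![u + p * h, h, s] := by
  induction p with
  | zero => simp
  | succ p ih =>
    rw [pow_succ', ← mulVec_mulVec, ih]
    ext i; fin_cases i <;> simp [M1, mulVec, dotProduct, Fin.sum_univ_three]
    ring

theorem M3_pow_mulVec (p : ℕ) (u h s : ℝ) : M3 ^ p *ᵥ ![u, h, s] = ![u, h, s + p * h] := by
  induction p with
  | zero => simp
  | succ p ih =>
    rw [pow_succ', ← mulVec_mulVec, ih]
    ext i; fin_cases i <;> simp [M3, mulVec, dotProduct, Fin.sum_univ_three]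
    ring

theorem M2_pow_mulVec (q : ℕ) (u h s : ℝ) :
    M2 ^ q *ᵥ ![u, h, s] = ![u, h + q * (u + s), s] := by
  induction q with
  | zero => simp
  | succ q ih =>
    rw [pow_succ', ← mulVec_mulVec, ih]
    ext i; fin_cases i <;> simp [M2, mulVec, dotProduct, Fin.sum_univ_three]
    ring

theorem Mp_mem_nonnegPosDiag (n : ℕ) (P P' Q : Fin n → ℕ) :
    Mp n P P' Q ∈ Matrix.nonnegPosDiag (Fin 3) := by
  have hM : ∀ M ∈ [M1, M2, M3], M ∈ Matrix.nonnegPosDiag (Fin 3) := by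
    simp only [List.mem_cons, List.not_mem_nil, or_false]
    rintro M (rfl | rfl | rfl) <;>
      exact ⟨fun i j => by fin_cases i <;> fin_cases j <;> simp [M1, M2, M3],
        fun i => by fin_cases i <;> simp [M1, M2, M3]⟩
  refine Submonoid.list_prod_mem _ fun A hA => ?_
  obtain ⟨i, -, rfl⟩ := List.mem_map.mp hA
  exact mul_mem (mul_mem (pow_mem (hM M1 (by simp)) _) (pow_mem (hM M3 (by simp)) _))
    (pow_mem (hM M2 (by simp)) _)

section PerronVector

variable (n : ℕ) (hn : 0 < n) (P P' Q : Fin n → ℕ) (h0 : ℝ)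

def perronVec (j : ℕ) : Fin 3 → ℝ :=
  ![heightSum n hn P P' Q h0 P n - (1 - wseq n hn P P' Q h0 n) * heightSum n hn P P' Q h0 P j,
    (1 - wseq n hn P P' Q h0 n) * hseq n hn P P' Q h0 j,
    heightSum n hn P P' Q h0 P' n - (1 - wseq n hn P P' Q h0 n) * heightSum n hn P P' Q h0 P' j]

theorem block_mulVec_perronVec_succ (j : ℕ) :
    (M1 ^ P (blk n hn j) * M3 ^ P' (blk n hn j) * M2 ^ Q (blk n hn j)) *ᵥ
      perronVec n hn P P' Q h0 (j + 1) = perronVec n hn P P' Q h0 j := by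
  set c := 1 - wseq n hn P P' Q h0 n
  set U := heightSum n hn P P' Q h0 P
  set S := heightSum n hn P P' Q h0 P'
  have hc : U n + S n = c := by
    simp only [c, U, S, wseq_eq_one_sub_heightSum n hn P P' Q h0 n]
    ring
  -- the first and last entries of `perronVec (j + 1)` add up to `c * w_{j+1}`
  have hmid : c * hseq n hn P P' Q h0 (j + 1) +
      Q (blk n hn j) * (U n - c * U (j + 1) + (S n - c * S (j + 1))) =
        c * hseq n hn P P' Q h0 j := by
    rw [hseq_succ, wseq_eq_one_sub_heightSum n hn P P' Q h0 (j + 1)]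
    linear_combination (Q (blk n hn j) : ℝ) * hc
  rw [← mulVec_mulVec, ← mulVec_mulVec, perronVec, M2_pow_mulVec, hmid, M3_pow_mulVec,
    M1_pow_mulVec, perronVec, heightSum_succ, heightSum_succ]
  ext i
  fin_cases i <;> simp only [Fin.zero_eta, Fin.mk_one, Fin.reduceFinMk, Matrix.cons_val] <;> ring

theorem Mp_mulVec_perronVec_self :
    Mp n P P' Q *ᵥ perronVec n hn P P' Q h0 n = perronVec n hn P P' Q h0 0 := by
  rw [Mp, ← List.ofFn_eq_map]
  refine Matrix.list_prod_ofFn_mulVec _ _ fun i => ?_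
  rw [← blk_of_lt hn i.isLt]
  exact block_mulVec_perronVec_succ n hn P P' Q h0 i

variable {n hn P P' Q h0} (hh0 : isH0 n hn P P' Q h0)
include hh0

theorem perronVec_self :
    perronVec n hn P P' Q h0 n = wseq n hn P P' Q h0 n • perronVec n hn P P' Q h0 0 := by
  rw [perronVec, perronVec, hseq_self hh0]
  ext i
  fin_cases i <;> simp [heightSum, hseq, wh] <;> ring

theorem Mp_mulVec_perronVec_zero (hw : wseq n hn P P' Q h0 n ≠ 0) :
    Mp n P P' Q *ᵥ perronVec n hn P P' Q h0 0 =
      (1 / wseq n hn P P' Q h0 n) • perronVec n hn P P' Q h0 0 := by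
  have h := Mp_mulVec_perronVec_self n hn P P' Q h0
  rw [perronVec_self hh0, mulVec_smul] at h
  conv_rhs => rw [← h]
  rw [smul_smul, one_div, inv_mul_cancel₀ hw, one_smul]

theorem perronVec_zero_pos (hP : ∃ k, 0 < P k) (hP' : ∃ k, 0 < P' k) (i : Fin 3) :
    0 < perronVec n hn P P' Q h0 0 i := by
  have hU := heightSum_pos hh0 hP
  have hS := heightSum_pos hh0 hP'
  have hc : 0 < 1 - wseq n hn P P' Q h0 n := by
    rw [wseq_eq_one_sub_heightSum]
    linarith
  fin_cases i
  · simpa [perronVec, heightSum] using hU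
  · exact mul_pos hc hh0.1.1
  · simpa [perronVec, heightSum] using hS

end PerronVector

/-- `λ_p = 1/w_{p,n} > 1` is an eigenvalue of the real matrix `M_p`, every
complex eigenvalue `μ ≠ λ_p` satisfies `|μ| < λ_p`, and the spectral radius of `M_p`
equals `1/w_{p,n}`. -/
theorem stmt1 (n : ℕ) (hn : 0 < n) (P P' Q : Fin n → ℕ) (hI : memI n P P' Q)
    (h0 : ℝ) (hh0 : isH0 n hn P P' Q h0) :
    1 < 1 / wseq n hn P P' Q h0 n ∧
    (1 / wseq n hn P P' Q h0 n) ∈ spectrum ℝ (Mp n P P' Q) ∧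
    (∀ μ : ℂ, μ ∈ spectrum ℂ ((Mp n P P' Q).map (fun x => (x : ℂ))) →
      μ ≠ ((1 / wseq n hn P P' Q h0 n : ℝ) : ℂ) →
      ‖μ‖ < 1 / wseq n hn P P' Q h0 n) ∧
    spectralRadius ℂ ((Mp n P P' Q).map (fun x => (x : ℂ)))
      = ENNReal.ofReal (1 / wseq n hn P P' Q h0 n) := by
  obtain ⟨-, -, hP, hP'⟩ := hI
  obtain ⟨hw0, hw1⟩ := wseq_self_mem_Ioo hh0 hP hP'
  have hM := Mp_mem_nonnegPosDiag n P P' Q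
  have hv := perronVec_zero_pos hh0 hP hP'
  have hMv := Mp_mulVec_perronVec_zero hh0 hw0.ne'
  exact ⟨one_lt_one_div hw0 hw1,
    Matrix.mem_spectrum_of_mulVec_eq_smul (fun h => (hv 0).ne' (congrFun h 0)) hMv,
    fun μ hμ hne => Matrix.norm_lt_of_mulVec_eq_smul_of_pos hM hv hMv hμ hne,
    Matrix.spectralRadius_eq_of_mulVec_eq_smul_of_pos hM hv hMv⟩
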